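/- If p and i are relatively prime integers with p even and i odd, then there exist odd integers c_p and c_i such that c_p·p + c_i·i = 1. -/

import Mathlib

theorem odd_mul_of_mul_add_mul_eq_one_of_even {R : Type*} [CommRing R] {a b p i : R}
    (hp : Even p) (h : a * p + b * i = 1) : Odd (b * i) := by
  have hbi : b * i = 1 - a * p := by linear_combination h
  rw [hbi]
  exact odd_one.sub_even (hp.mul_left a)

theorem stmt5_general (p i : ℤ) (h : IsCoprime p i) (hp : Even p) :
    ∃ cp ci : ℤ, Odd cp ∧ Odd ci ∧ cp * p + ci * i = 1 := by
  obtain ⟨a, b, hab⟩ := h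
  obtain ⟨hb, hi⟩ := Int.odd_mul.mp (odd_mul_of_mul_add_mul_eq_one_of_even hp hab)
  rcases Int.even_or_odd a with ha | ha
  -- adding the trivial relation i * p - p * i = 0 flips the parity of a but not of b
  · exact ⟨a + i, b - p, ha.add_odd hi, hb.sub_even hp, by linear_combination hab⟩
  · exact ⟨a, b, ha, hb, hab⟩

/-- If p and i are coprime integers with p even and i odd, then there are Bezout
coefficients that are both odd: odd c_p, c_i with c_p·p + c_i·i = 1. -/
theorem stmt5 (p i : ℤ) (h : IsCoprime p i) (hp : Even p) (hi : Odd i) :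
    ∃ cp ci : ℤ, Odd cp ∧ Odd ci ∧ cp * p + ci * i = 1 :=
  stmt5_general p i h hp
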